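/- Let R_{c,c}(x₁,x₂) be given explicitly by R_{c,c} = (1-p)R₁ + pR₂ + ((1-p)p² + p(1-p)²)r, where p = x₂/(x₁+x₂). Assume r > 0 and x₁, x₂ > 0. Then -∂R_{c,c}/∂x₂ - (-∂R_{c,c}/∂x₁) > 0 if and only if p > 1/2 + (R₂ - R₁)/(2r). -/

import Mathlib

lemma key (R₁ R₂ r p' d x : ℝ) (q : ℝ → ℝ) (hp : HasDerivAt q p' x)
    (hd : HasDerivAt (fun a => (1 - q a) * R₁ + q a * R₂ +
      ((1 - q a) * (q a) ^ 2 + q a * (1 - q a) ^ 2) * r) d x) :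
    d = (R₂ - R₁ + (1 - 2 * q x) * r) * p' := by
  have h1 : HasDerivAt (fun a => (1 : ℝ) - q a) (0 - p') x :=
    (hasDerivAt_const x (1:ℝ)).sub hp
  have h := ((h1.mul_const R₁).add (hp.mul_const R₂)).add
    (((h1.mul (hp.pow 2)).add (hp.mul (h1.pow 2))).mul_const r)
  have := hd.unique h
  rw [this]; simp only [Pi.pow_apply]; ring

/-- For the mixed-on-mixed risk R_{c,c} = (1-p)R₁ + pR₂ + ((1-p)p² + p(1-p)²)r with
p = x₂/(x₁+x₂), the truthful influence exceeds the heuristic influence iff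
p > 1/2 + (R₂-R₁)/(2r). -/
theorem truthful_vs_heuristic_influence (R₁ R₂ r x₁ x₂ d₁ d₂ : ℝ)
    (hr : 0 < r) (h₁ : 0 < x₁) (h₂ : 0 < x₂)
    (hd₁ : HasDerivAt (fun a : ℝ =>
        (1 - x₂ / (a + x₂)) * R₁ + (x₂ / (a + x₂)) * R₂ +
        ((1 - x₂ / (a + x₂)) * (x₂ / (a + x₂)) ^ 2 +
          (x₂ / (a + x₂)) * (1 - x₂ / (a + x₂)) ^ 2) * r) d₁ x₁)
    (hd₂ : HasDerivAt (fun b : ℝ =>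
        (1 - b / (x₁ + b)) * R₁ + (b / (x₁ + b)) * R₂ +
        ((1 - b / (x₁ + b)) * (b / (x₁ + b)) ^ 2 +
          (b / (x₁ + b)) * (1 - b / (x₁ + b)) ^ 2) * r) d₂ x₂) :
    0 < (-d₂) - (-d₁) ↔ x₂ / (x₁ + x₂) > 1 / 2 + (R₂ - R₁) / (2 * r) := by
  have hs : (0:ℝ) < x₁ + x₂ := by linarith
  have hs' : x₁ + x₂ ≠ 0 := ne_of_gt hs
  have hq₁ : HasDerivAt (fun a : ℝ => x₂ / (a + x₂))
      ((0 * (x₁ + x₂) - x₂ * 1) / (x₁ + x₂) ^ 2) x₁ :=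
    (hasDerivAt_const x₁ x₂).div ((hasDerivAt_id x₁).add_const x₂) hs'
  have hq₂ := HasDerivAt.div (hasDerivAt_id x₂)
    ((hasDerivAt_const x₂ x₁).add (hasDerivAt_id x₂)) hs'
  have e₁ := key R₁ R₂ r _ d₁ x₁ _ hq₁ hd₁
  have e₂ := key R₁ R₂ r _ d₂ x₂ _ hq₂ hd₂
  simp only [id, Pi.div_apply, Pi.add_apply] at e₂
  have hdiff : (-d₂) - (-d₁) =
      -(R₂ - R₁ + (1 - 2 * (x₂ / (x₁ + x₂))) * r) / (x₁ + x₂) := by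
    rw [e₁, e₂]
    field_simp
    ring
  set p := x₂ / (x₁ + x₂) with hp
  have h2r : (R₂ - R₁) / (2 * r) * (2 * r) = R₂ - R₁ :=
    div_mul_cancel₀ _ (by positivity)
  rw [hdiff, div_pos_iff]
  constructor
  · rintro (⟨h, -⟩ | ⟨-, h⟩)
    · have hK : R₂ - R₁ + (1 - 2 * p) * r < 0 := by linarith
      by_contra hc
      push_neg at hc
      nlinarith [mul_nonneg (le_of_lt hr) (sub_nonneg.2 hc)]
    · linarith
  · intro h
    left
    refine ⟨?_, hs⟩
    nlinarith [mul_pos hr (sub_pos.2 h)]
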